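/- Let A be an N×N complex matrix with A·A = 0 and rank A ≤ 2. Then for every 1 ≤ k ≤ N, the coefficient of the basis vector e_1 ∧ ⋯ ∧ e_k in the expansion of (⋀^k(exp A))(e_1 ∧ ⋯ ∧ e_k) in the standard wedge basis of ⋀^k(ℂ^N) equals 1 + Tr(A_{k×k}) + ½((Tr(A_{k×k}))² − Tr((A_{k×k})²)). (For A in the minimal nilpotent orbit of so(2n+1,ℂ) or so(2n,ℂ), which consists of square-zero matrices of rank 2, these are the Hamiltonians Tr(A_{k×k}) and Tr(⋀²A_{k×k}) of the integrable system in types B and D for the non-spinor fundamental representations.) -/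

import Mathlib

open ExteriorAlgebra

/-- The wedge `e_{i₁} ∧ ⋯ ∧ e_{i_k}` of standard basis vectors of `ℂ^N` indexed by the
increasing enumeration of a `k`-element subset `S` of `Fin N`, viewed in the exterior
algebra of `ℂ^N`.  These wedges form the standard basis of the `k`-th exterior power. -/
noncomputable def wedgeOfSubset {N k : ℕ} (S : {S : Finset (Fin N) // S.card = k}) :
    ExteriorAlgebra ℂ (Fin N → ℂ) :=
  ExteriorAlgebra.ιMulti ℂ k fun j : Fin k => Pi.single ((S.1.orderIsoOfFin S.2 j : Fin N)) (1 : ℂ)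

/-!
Since `A² = 0`, `exp A = 1 + A`. The coefficient of `e_1 ∧ ⋯ ∧ e_k` in
`⋀^k(g)(e_1 ∧ ⋯ ∧ e_k)` is the leading principal `k × k` minor of `g`, so the coefficient in
question is `det (1 + B)` with `B = A_{k×k}` of rank at most `2`. Factor `B = C * D` through
`ℂ²`; by the Weinstein–Aronszajn identity `det (1 + C * D) = det (1 + D * C)`, and for a
`2 × 2` matrix `E` one has `det (1 + E) = 1 + tr E + det E` with
`2 det E = (tr E)² - tr (E²)`.
-/

open scoped Matrix

theorem NormedSpace.exp_eq_one_add_of_mul_self_eq_zero {𝔸 : Type*} [Ring 𝔸] [Algebra ℚ 𝔸]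
    [TopologicalSpace 𝔸] [IsTopologicalRing 𝔸] {x : 𝔸} (hx : x * x = 0) :
    NormedSpace.exp x = 1 + x := by
  have hpow : ∀ n, 2 ≤ n → x ^ n = 0 := fun n hn => by
    obtain ⟨m, rfl⟩ := Nat.exists_eq_add_of_le hn
    rw [pow_add, sq, hx, zero_mul]
  rw [congrFun (NormedSpace.exp_eq_tsum ℚ) x, tsum_eq_sum (s := Finset.range 2)]
  · simp [Finset.sum_range_succ]
  · intro n hn
    rw [hpow n (by simpa [Nat.lt_iff_add_one_le] using hn), smul_zero]

namespace Matrix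

variable {m n K : Type*} [Fintype n] [Field K]

theorem exists_eq_mul_fin_rank (B : Matrix m n K) :
    ∃ (C : Matrix m (Fin B.rank) K) (D : Matrix (Fin B.rank) n K), B = C * D := by
  classical
  let b := Module.finBasisOfFinrankEq K (LinearMap.range B.mulVecLin) rfl
  have hcol : ∀ j, B.col j ∈ LinearMap.range B.mulVecLin := fun j =>
    ⟨Pi.single j 1, by ext; simp⟩
  refine ⟨of fun i l => (b l : m → K) i, of fun l j => b.repr ⟨_, hcol j⟩ l, ?_⟩
  ext i j
  have hsum := congrArg (fun v : LinearMap.range B.mulVecLin => (v : m → K) i)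
    (b.sum_repr ⟨_, hcol j⟩)
  simp only [Submodule.coe_sum, Submodule.coe_smul, Finset.sum_apply, Pi.smul_apply,
    smul_eq_mul, col_apply] at hsum
  rw [mul_apply, ← hsum]
  exact Finset.sum_congr rfl fun l _ => mul_comm _ _

theorem exists_eq_mul_of_rank_le (B : Matrix m n K) {r : ℕ} (h : B.rank ≤ r) :
    ∃ (C : Matrix m (Fin r) K) (D : Matrix (Fin r) n K), B = C * D := by
  obtain ⟨C, D, hB⟩ := B.exists_eq_mul_fin_rank
  let P : Matrix (Fin B.rank) (Fin r) K :=
    (1 : Matrix (Fin r) (Fin r) K).submatrix (Fin.castLE h) id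
  have hP : P * Pᵀ = 1 := by
    rw [transpose_submatrix, transpose_one, ← submatrix_mul _ _ _ _ _ Function.bijective_id,
      Matrix.mul_one]
    exact submatrix_one_embedding (Fin.castLEEmb h)
  refine ⟨C * P, Pᵀ * D, ?_⟩
  rw [Matrix.mul_assoc, ← Matrix.mul_assoc P, hP, Matrix.one_mul, ← hB]

theorem det_one_add_fin_two {R : Type*} [CommRing R] (E : Matrix (Fin 2) (Fin 2) R) :
    (1 + E).det = 1 + E.trace + E.det := by
  simp [det_fin_two, trace_fin_two]
  ring

theorem two_mul_det_fin_two {R : Type*} [CommRing R] (E : Matrix (Fin 2) (Fin 2) R) :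
    2 * E.det = E.trace ^ 2 - (E * E).trace := by
  simp [det_fin_two, trace_fin_two, mul_apply]
  ring

theorem det_one_add_of_rank_le_two [DecidableEq n] [NeZero (2 : K)] (B : Matrix n n K)
    (h : B.rank ≤ 2) :
    (1 + B).det = 1 + B.trace + (1 / 2 : K) * (B.trace ^ 2 - (B * B).trace) := by
  obtain ⟨C, D, rfl⟩ := B.exists_eq_mul_of_rank_le h
  have htr : (C * D).trace = (D * C).trace := trace_mul_comm C D
  have htr_sq : (C * D * (C * D)).trace = (D * C * (D * C)).trace := by
    rw [Matrix.mul_assoc, trace_mul_comm]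
    simp only [Matrix.mul_assoc]
  rw [det_one_add_mul_comm, det_one_add_fin_two, htr, htr_sq, ← two_mul_det_fin_two, one_div,
    inv_mul_cancel_left₀ (NeZero.ne 2)]

end Matrix

theorem Finset.orderEmbOfFin_map_univ {α : Type*} [LinearOrder α] {k : ℕ} (f : Fin k ↪o α)
    (h : (Finset.univ.map f.toEmbedding).card = k) :
    (Finset.univ.map f.toEmbedding).orderEmbOfFin h = f :=
  (Finset.orderEmbOfFin_unique' h fun x => by simp).symm

theorem Module.Basis.coe_eq_sum_iff {ι R M : Type*} [Fintype ι] [Semiring R] [AddCommMonoid M]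
    [Module R M] {P : Submodule R M} (b : Module.Basis ι R P) (x : P) (c : ι → R) :
    (x : M) = ∑ i, c i • (b i : M) ↔ ⇑(b.repr x) = c := by
  have hcoe : (x : M) = ∑ i, c i • (b i : M) ↔ x = ∑ i, c i • b i := by
    simp [Subtype.ext_iff]
  rw [hcoe]
  constructor
  · rintro rfl
    exact b.repr_sum_self c
  · rintro rfl
    exact (b.sum_repr x).symm

noncomputable def wedgeBasis (N k : ℕ) :
    Module.Basis {S : Finset (Fin N) // S.card = k} ℂ (⋀[ℂ]^k (Fin N → ℂ)) :=
  ((Pi.basisFun ℂ (Fin N)).exteriorPower k).reindex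
    (Equiv.subtypeEquivRight fun _ => Set.powersetCard.mem_iff)

theorem coe_wedgeBasis {N k : ℕ} (S : {S : Finset (Fin N) // S.card = k}) :
    (wedgeBasis N k S : ExteriorAlgebra ℂ (Fin N → ℂ)) = wedgeOfSubset S := by
  rw [wedgeBasis, Module.Basis.reindex_apply, exteriorPower.basis_apply,
    exteriorPower.ιMulti_family_apply_coe]
  simp [ExteriorAlgebra.ιMulti_family, wedgeOfSubset, Function.comp_def,
    Set.powersetCard.ofFinEmbEquiv_symm_apply]

theorem wedgeBasis_repr_ιMulti {N k : ℕ} (v : Fin k → Fin N → ℂ)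
    (S : {S : Finset (Fin N) // S.card = k}) :
    (wedgeBasis N k).repr (exteriorPower.ιMulti ℂ k v) S =
      (Matrix.of fun i j => v i (S.1.orderEmbOfFin S.2 j)).det := by
  simp [wedgeBasis, exteriorPower.basis_repr_apply, Set.powersetCard.ofFinEmbEquiv_symm_apply]

/-- Types B and D: for a square-zero `N×N` complex matrix `A` of rank at most `2`
(e.g. an element of the minimal nilpotent orbit of `so(2n,ℂ)` or `so(2n+1,ℂ)`), and
`1 ≤ k ≤ N`, the coefficient of `e_1 ∧ ⋯ ∧ e_k` in the wedge-basis expansion of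
`⋀^k(exp A)(e_1 ∧ ⋯ ∧ e_k)` equals
`1 + Tr(A_{k×k}) + ½((Tr A_{k×k})² − Tr((A_{k×k})²))`. -/
theorem stmt10 {N : ℕ} (A : Matrix (Fin N) (Fin N) ℂ) (hA : A * A = 0) (hrank : A.rank ≤ 2)
    (k : ℕ) (hkN : k ≤ N) :
    (∃ c : {S : Finset (Fin N) // S.card = k} → ℂ,
        ExteriorAlgebra.map (Matrix.toLin' (NormedSpace.exp A))
            (ExteriorAlgebra.ιMulti ℂ k fun j : Fin k =>
              Pi.single (Fin.castLE hkN j) (1 : ℂ)) =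
          ∑ S : {S : Finset (Fin N) // S.card = k}, c S • wedgeOfSubset S) ∧
    ∀ c : {S : Finset (Fin N) // S.card = k} → ℂ,
      ExteriorAlgebra.map (Matrix.toLin' (NormedSpace.exp A))
          (ExteriorAlgebra.ιMulti ℂ k fun j : Fin k =>
            Pi.single (Fin.castLE hkN j) (1 : ℂ)) =
        ∑ S : {S : Finset (Fin N) // S.card = k}, c S • wedgeOfSubset S →
      c ⟨Finset.map (Fin.castLEOrderEmb hkN).toEmbedding Finset.univ, by simp⟩ =
        1 + (A.submatrix (Fin.castLE hkN) (Fin.castLE hkN)).trace +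
          (1 / 2 : ℂ) * ((A.submatrix (Fin.castLE hkN) (Fin.castLE hkN)).trace ^ 2 -
            (A.submatrix (Fin.castLE hkN) (Fin.castLE hkN) *
              A.submatrix (Fin.castLE hkN) (Fin.castLE hkN)).trace) := by
  have hmap : ExteriorAlgebra.map (Matrix.toLin' (NormedSpace.exp A))
      (ExteriorAlgebra.ιMulti ℂ k fun j : Fin k => Pi.single (Fin.castLE hkN j) (1 : ℂ)) =
      exteriorPower.ιMulti ℂ k (fun j => (1 + A).col (Fin.castLE hkN j)) := by
    rw [ExteriorAlgebra.map_apply_ιMulti, NormedSpace.exp_eq_one_add_of_mul_self_eq_zero hA,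
      exteriorPower.ιMulti_apply_coe]
    congr 1
    ext j i
    simp [Pi.single_apply, Matrix.one_apply]
  simp_rw [hmap, ← coe_wedgeBasis, Module.Basis.coe_eq_sum_iff]
  refine ⟨⟨_, rfl⟩, ?_⟩
  rintro c rfl
  rw [wedgeBasis_repr_ιMulti, Finset.orderEmbOfFin_map_univ]
  have hminor : (Matrix.of fun i j => (1 + A).col (Fin.castLE hkN i) (Fin.castLEOrderEmb hkN j)) =
      (1 + A.submatrix (Fin.castLE hkN) (Fin.castLE hkN))ᵀ := by
    ext i j
    simp [Matrix.one_apply]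
  rw [hminor, Matrix.det_transpose,
    Matrix.det_one_add_of_rank_le_two _ ((A.rank_submatrix_le _ _).trans hrank)]
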